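/- arXiv:1701.08409 — 2 statements merged into one kernel-verified Lean document; each statement's English description precedes it below -/
import Mathlib

section
/- Let k > 1 and j ≥ 1 be fixed integers, let F : 𝔽₂ʲ → 𝔽₂ be a Boolean function, let k̄ = 2⌊k/2⌋ + 1 with 2-adic expansion k̄ = 2^{a_s} + ⋯ + 2^{a₁} + 1 (0 < a₁ < ⋯ < a_s), and let ε(k) = 0 if k is a power of 2 and 1 otherwise. Define b_n = Σ_{l=0}^{n} ( Σ_{m=0}^{j} C_m(F)(-1)^{C(l+m,k)} ) C(n,l), which equals S(σ_{n+j,k} + F) for n + j ≥ k. Then (b_n)_{n≥1} satisfies the homogeneous linear recurrence whose characteristic polynomial is f(X) = (X−2)^{ε(k)} Π_{l=1}^{s} Φ_{2^{a_l+1}}(X−1). Moreover, if F is balanced (i.e. S(F) = 0), then (b_n)_{n≥1} satisfies the homogeneous linear recurrence whose characteristic polynomial is Π_{l=1}^{s} Φ_{2^{a_l+1}}(X−1), which has degree k̄ − 1 = 2^{a_s} + ⋯ + 2^{a₁}. -/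
def expSum {N : ℕ} (G : (Fin N → ZMod 2) → ZMod 2) : ℤ :=
  ∑ x : Fin N → ZMod 2, (-1 : ℤ) ^ (G x).val

def sigma (n k : ℕ) (x : Fin n → ZMod 2) : ZMod 2 :=
  ∑ A ∈ Finset.powersetCard k (Finset.univ : Finset (Fin n)), ∏ i ∈ A, x i

def wt {j : ℕ} (x : Fin j → ZMod 2) : ℕ :=
  (Finset.univ.filter (fun i => x i = 1)).card

def coefC {j : ℕ} (F : (Fin j → ZMod 2) → ZMod 2) (m : ℕ) : ℤ :=
  ∑ x ∈ Finset.univ.filter (fun x : Fin j → ZMod 2 => wt x = m), (-1 : ℤ) ^ (F x).val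

/-!
Since `σ_{N,k}(x) = C(wt x, k) mod 2`, splitting `x` into its first `j` and last `n` coordinates
and grouping by Hamming weight gives `b n = S(σ_{n+j,k} + F)`.

Let `E` be the shift of integer sequences. The sequence `b` is the binomial transform `B c` of
`c l = Σ_m C_m(F) (-1)^C(l+m,k)`, and `E ∘ B = B ∘ (E + 1)`. Since `Φ_{2^(a+1)} = 1 + X^(2^a)`,
`g (E + 1) = Π_i (1 + E^(2^(a_i)))`. By Lucas' theorem, for `r < 2^t` the operator
`1 + E^(2^t)` sends `l ↦ (-1)^C(l, r + 2^t)` to `1 + (-1)^C(l, r)`; stripping the binary digits of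
`k̄ - 1` one at a time gives `g (E + 1) c = κ + ν (-1)^l` with `κ = S(F) (2^s - 2 + (k mod 2))`.
The binomial transform sends `l ↦ q^l` to `n ↦ (q + 1)^n`, so `(g(E) b) n = κ 2^n + ν 0^n`. For
`n ≥ 1` this vanishes when `F` is balanced, and is annihilated by `E - 2` in general; when `k` is a
power of two, `κ = 0` already.
-/

open Polynomial Finset

section BooleanFunctions

lemma neg_one_pow_val_add (a b : ZMod 2) :
    (-1 : ℤ) ^ (a + b).val = (-1) ^ a.val * (-1) ^ b.val := by
  decide +revert

lemma neg_one_pow_val_natCast (n : ℕ) : (-1 : ℤ) ^ (n : ZMod 2).val = (-1) ^ n := by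
  rw [ZMod.val_natCast, ← neg_one_pow_eq_pow_mod_two]

lemma ite_eq_one_zmod_two (a : ZMod 2) : (if a = 1 then 1 else 0) = a := by
  decide +revert

lemma wt_le {n : ℕ} (x : Fin n → ZMod 2) : wt x ≤ n :=
  (card_filter_le _ _).trans (card_fin n).le

lemma sigma_eq_choose_wt {N : ℕ} (k : ℕ) (x : Fin N → ZMod 2) :
    sigma N k x = (wt x).choose k := by
  have hfilter : {A ∈ powersetCard k (univ : Finset (Fin N)) | ∀ i ∈ A, x i = 1} =
      powersetCard k ({i | x i = 1} : Finset (Fin N)) := by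
    ext A
    simp [mem_powersetCard, subset_iff, and_comm]
  rw [sigma, wt, ← card_powersetCard, ← hfilter, ← sum_boole]
  refine sum_congr rfl fun A _ => ?_
  rw [prod_congr rfl fun i _ => (ite_eq_one_zmod_two (x i)).symm]
  convert prod_boole

lemma sum_comp_wt {M : Type*} [AddCommMonoid M] {n : ℕ} (φ : ℕ → M) :
    ∑ z : Fin n → ZMod 2, φ (wt z) = ∑ l ∈ range (n + 1), n.choose l • φ l := by
  have h := sum_powerset_apply_card φ (x := (univ : Finset (Fin n)))
  rw [card_fin] at h
  rw [← h]
  refine sum_nbij' (fun z => ({i | z i = 1} : Finset (Fin n))) (fun A i => if i ∈ A then 1 else 0)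
    (by simp) (by simp) (fun z _ => ?_) (fun A _ => ?_) (fun z _ => rfl)
  · ext i; simpa using ite_eq_one_zmod_two (z i)
  · ext i; by_cases h : i ∈ A <;> simp [h]

lemma sum_neg_one_pow_mul_comp_wt {j : ℕ} (F : (Fin j → ZMod 2) → ZMod 2) (ψ : ℕ → ℤ) :
    ∑ y, (-1 : ℤ) ^ (F y).val * ψ (wt y) = ∑ m ∈ range (j + 1), coefC F m * ψ m := by
  rw [← sum_fiberwise_of_maps_to (g := wt) fun y _ => mem_range_succ_iff.mpr (wt_le y)]
  refine sum_congr rfl fun m _ => ?_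
  rw [coefC, sum_mul]
  exact sum_congr rfl fun y hy => by rw [(mem_filter.mp hy).2]

lemma expSum_eq_sum_coefC {j : ℕ} (F : (Fin j → ZMod 2) → ZMod 2) :
    expSum F = ∑ m ∈ range (j + 1), coefC F m := by
  simpa [expSum] using sum_neg_one_pow_mul_comp_wt F 1

lemma wt_comp_cast {a b : ℕ} (h : a = b) (x : Fin b → ZMod 2) :
    wt (fun i : Fin a => x (Fin.cast h i)) = wt x := by
  subst h; rfl

lemma wt_append {j n : ℕ} (y : Fin j → ZMod 2) (z : Fin n → ZMod 2) :
    wt (Fin.append y z) = wt y + wt z := by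
  simp only [wt, card_filter, Fin.sum_univ_add, Fin.append_left, Fin.append_right]

lemma sum_fin_add_eq_sum_sum_wt {M : Type*} [AddCommMonoid M] {n j : ℕ}
    (Φ : (Fin j → ZMod 2) → ℕ → M) :
    ∑ x : Fin (n + j) → ZMod 2, Φ (fun i => x (Fin.castLE (Nat.le_add_left j n) i)) (wt x) =
      ∑ y : Fin j → ZMod 2, ∑ z : Fin n → ZMod 2, Φ y (wt y + wt z) := by
  rw [← Fintype.sum_prod_type', ← Fintype.sum_equiv
    ((Fin.appendEquiv j n).trans ((finCongr (add_comm j n)).arrowCongr (Equiv.refl _)))]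
  rintro ⟨y, z⟩
  congr 1
  · funext i
    exact (Fin.append_left y z i).symm
  · exact ((wt_comp_cast (add_comm j n).symm _).trans (wt_append y z)).symm

theorem expSum_sigma_add {j : ℕ} (F : (Fin j → ZMod 2) → ZMod 2) (n k : ℕ) :
    expSum (fun x : Fin (n + j) → ZMod 2 =>
        sigma (n + j) k x + F (fun i => x (Fin.castLE (Nat.le_add_left j n) i))) =
      ∑ l ∈ range (n + 1),
        (∑ m ∈ range (j + 1), coefC F m * (-1 : ℤ) ^ (l + m).choose k) * n.choose l := by
  let ψ (m : ℕ) : ℤ := ∑ l ∈ range (n + 1), n.choose l • (-1 : ℤ) ^ (m + l).choose k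
  calc _ = ∑ y : Fin j → ZMod 2, ∑ z : Fin n → ZMod 2,
          (-1 : ℤ) ^ (F y).val * (-1) ^ (wt y + wt z).choose k := by
        simp only [expSum, neg_one_pow_val_add, sigma_eq_choose_wt, neg_one_pow_val_natCast,
          mul_comm ((-1 : ℤ) ^ Nat.choose _ _)]
        exact sum_fin_add_eq_sum_sum_wt fun y w => (-1 : ℤ) ^ (F y).val * (-1) ^ w.choose k
    _ = ∑ y, (-1 : ℤ) ^ (F y).val * ψ (wt y) := by
        simp only [← mul_sum, ψ]
        exact sum_congr rfl fun y _ =>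
          congrArg _ (sum_comp_wt fun w => (-1 : ℤ) ^ (wt y + w).choose k)
    _ = _ := by
        rw [sum_neg_one_pow_mul_comp_wt]
        simp only [ψ, mul_sum, sum_mul, nsmul_eq_mul]
        rw [sum_comm]
        exact sum_congr rfl fun l _ => sum_congr rfl fun m _ => by rw [add_comm m l]; ring

end BooleanFunctions

section ShiftOperator

variable {R : Type*} [CommRing R]

def seqShift : Module.End R (ℕ → R) := LinearMap.funLeft R R Nat.succ

lemma seqShift_pow_apply (i : ℕ) (a : ℕ → R) (n : ℕ) : (seqShift ^ i) a n = a (n + i) := by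
  induction i generalizing a with
  | zero => rfl
  | succ i ih => rw [pow_succ, Module.End.mul_apply, ih]; rfl

lemma aeval_seqShift_apply (p : R[X]) (a : ℕ → R) (n : ℕ) :
    aeval seqShift p a n = ∑ i ∈ range (p.natDegree + 1), p.coeff i * a (n + i) := by
  simp [aeval_eq_sum_range, LinearMap.sum_apply, seqShift_pow_apply]

lemma Polynomial.Monic.apply_add_natDegree_eq_of_aeval_seqShift {p : R[X]}
    (hp : p.Monic) {a : ℕ → R} {n : ℕ} (h : aeval seqShift p a n = 0) :
    a (n + p.natDegree) = ∑ i ∈ range p.natDegree, -p.coeff i * a (n + i) := by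
  rw [aeval_seqShift_apply, sum_range_succ, hp.coeff_natDegree, one_mul] at h
  simp only [neg_mul, sum_neg_distrib]
  linear_combination h

def geomSeq (q : R) : ℕ → R := fun n => q ^ n

lemma seqShift_pow_geomSeq (i : ℕ) (q : R) :
    (seqShift ^ i) (geomSeq q) = q ^ i • geomSeq q := by
  ext n
  simp [seqShift_pow_apply, geomSeq, pow_add, mul_comm]

lemma aeval_seqShift_geomSeq (p : R[X]) (q : R) :
    aeval seqShift p (geomSeq q) = p.eval q • geomSeq q := by
  ext n
  simp [aeval_eq_sum_range, LinearMap.sum_apply, seqShift_pow_geomSeq, eval_eq_sum_range,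
    sum_mul, mul_assoc]

/-- `binomialTransform c n = ((E + 1) ^ n c) 0 = ∑ l ≤ n, C(n, l) c l` for the shift `E`; in this
form `E ∘ binomialTransform = binomialTransform ∘ (E + 1)` holds by definition. -/
def binomialTransform : Module.End R (ℕ → R) :=
  LinearMap.pi fun n => LinearMap.proj 0 ∘ₗ (seqShift + 1) ^ n

lemma binomialTransform_apply (c : ℕ → R) (n : ℕ) :
    binomialTransform c n = ∑ l ∈ range (n + 1), c l * n.choose l := by
  simp [binomialTransform, (Commute.one_right seqShift).add_pow, Module.End.mul_apply,
    seqShift_pow_apply, mul_comm]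

lemma binomialTransform_semiconjBy :
    SemiconjBy (binomialTransform (R := R)) (seqShift + 1) seqShift := by
  ext c n
  simp [binomialTransform, seqShift, pow_succ]

lemma aeval_seqShift_mul_binomialTransform (p : R[X]) :
    aeval (seqShift (R := R)) p * binomialTransform =
      binomialTransform * aeval (seqShift + 1) p := by
  simp only [aeval_eq_sum_range, sum_mul, mul_sum, smul_mul_assoc, mul_smul_comm,
    (binomialTransform_semiconjBy.pow_right _).eq]

lemma binomialTransform_geomSeq (q : R) : binomialTransform (geomSeq q) = geomSeq (q + 1) := by
  ext n
  simp [binomialTransform_apply, geomSeq, add_pow]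

end ShiftOperator

section Polynomials

variable {R : Type*} [CommRing R]

lemma cyclotomic_two_pow_succ (t : ℕ) : cyclotomic (2 ^ (t + 1)) R = 1 + X ^ 2 ^ t := by
  simp [cyclotomic_prime_pow_eq_geom_sum Nat.prime_two, sum_range_succ]

lemma aeval_add_one_comp_X_sub_one {A : Type*} [Ring A] [Algebra R A] (x : A) (p : R[X]) :
    aeval (x + 1) (p.comp (X - 1)) = aeval x p := by
  simp [aeval_comp]

variable [Nontrivial R]

lemma monic_cyclotomic_comp_X_sub_one (n : ℕ) : ((cyclotomic n R).comp (X - 1)).Monic :=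
  (cyclotomic.monic n R).comp (by simpa using monic_X_sub_C (1 : R))
    (by rw [← C_1, natDegree_X_sub_C]; exact one_ne_zero)

lemma natDegree_cyclotomic_comp_X_sub_one (n : ℕ) :
    ((cyclotomic n R).comp (X - 1)).natDegree = n.totient := by
  have hX : (X - 1 : R[X]).leadingCoeff = 1 := by rw [← C_1, leadingCoeff_X_sub_C]
  rw [natDegree_comp_eq_of_mul_ne_zero (by simp [(cyclotomic.monic n R).leadingCoeff, hX]),
    natDegree_cyclotomic, ← C_1, natDegree_X_sub_C, mul_one]

lemma natDegree_prod_cyclotomic_two_pow_comp_X_sub_one {s : ℕ} (e : Fin s → ℕ) :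
    (∏ i, (cyclotomic (2 ^ (e i + 1)) R).comp (X - 1)).natDegree = ∑ i, 2 ^ e i := by
  rw [natDegree_prod_of_monic _ _ fun i _ => monic_cyclotomic_comp_X_sub_one _]
  simp [natDegree_cyclotomic_comp_X_sub_one, Nat.totient_prime_pow_succ Nat.prime_two]

end Polynomials

lemma Choose.choose_modEq_choose_mod_mul_choose_div_pow_nat {p : ℕ} [Fact p.Prime]
    (a n k : ℕ) :
    n.choose k ≡ (n % p ^ a).choose (k % p ^ a) * (n / p ^ a).choose (k / p ^ a) [MOD p] := by
  induction a generalizing n k with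
  | zero => simp only [pow_zero, Nat.mod_one, Nat.div_one, Nat.choose_self, one_mul]; rfl
  | succ a ih =>
    have hmod (m : ℕ) : m % p ^ (a + 1) % p = m % p :=
      Nat.mod_mod_of_dvd _ (dvd_pow_self p a.succ_ne_zero)
    have hdiv (m : ℕ) : m % p ^ (a + 1) / p = m / p % p ^ a := by
      rw [pow_succ', Nat.mod_mul_right_div_self]
    have hdiv' (m : ℕ) : m / p ^ (a + 1) = m / p / p ^ a := by
      rw [pow_succ', Nat.div_div_eq_div_mul]
    have lucas_low := Choose.choose_modEq_choose_mod_mul_choose_div_nat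
      (n := n % p ^ (a + 1)) (k := k % p ^ (a + 1)) (p := p)
    rw [hmod, hmod, hdiv, hdiv] at lucas_low
    calc n.choose k ≡ (n % p).choose (k % p) * (n / p).choose (k / p) [MOD p] :=
          Choose.choose_modEq_choose_mod_mul_choose_div_nat
      _ ≡ (n % p).choose (k % p) * ((n / p % p ^ a).choose (k / p % p ^ a) *
            (n / p / p ^ a).choose (k / p / p ^ a)) [MOD p] := (ih _ _).mul_left _
      _ ≡ _ [MOD p] := by
        rw [← mul_assoc, hdiv', hdiv']
        exact (lucas_low.symm).mul_right _

def negOnePowChoose (k : ℕ) : ℕ → ℤ := fun l => (-1) ^ l.choose k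

lemma negOnePowChoose_add_two_pow {r t : ℕ} (hr : r < 2 ^ t) (l : ℕ) :
    negOnePowChoose (r + 2 ^ t) (l + 2 ^ t) + negOnePowChoose (r + 2 ^ t) l =
      1 + negOnePowChoose r l := by
  have sign {m n : ℕ} (h : m ≡ n [MOD 2]) : (-1 : ℤ) ^ m = (-1) ^ n := by
    rw [neg_one_pow_eq_pow_mod_two, h, ← neg_one_pow_eq_pow_mod_two]
  have lucas (n k : ℕ) := Choose.choose_modEq_choose_mod_mul_choose_div_pow_nat (p := 2) t n k
  simp only [negOnePowChoose]
  rw [sign (lucas (l + 2 ^ t) _), sign (lucas l (r + 2 ^ t)), sign (lucas l r)]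
  simp [Nat.mod_eq_of_lt hr, Nat.div_eq_of_lt hr, pow_mul]
  rcases neg_one_pow_eq_or ℤ ((l % 2 ^ t).choose r) with h | h <;> simp [h, pow_succ]

lemma aeval_seqShift_prod_negOnePowChoose {s : ℕ} (e : Fin s → ℕ) (he : StrictMono e)
    (r : ℕ) (hr : ∀ i, r < 2 ^ e i) :
    aeval seqShift (∏ i, (1 + X ^ 2 ^ e i) : ℤ[X]) (negOnePowChoose (r + ∑ i, 2 ^ e i)) =
      (2 ^ s - 1 : ℤ) • geomSeq 1 + negOnePowChoose r := by
  induction s generalizing r with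
  | zero => simp
  | succ s ih =>
    have hr' (i : Fin s) : r + 2 ^ e 0 < 2 ^ e i.succ :=
      calc r + 2 ^ e 0 < 2 ^ (e 0 + 1) := by rw [pow_succ]; linarith [hr 0]
        _ ≤ 2 ^ e i.succ := Nat.pow_le_pow_right two_pos (he (Fin.succ_pos i))
    rw [Fin.prod_univ_succ, Fin.sum_univ_succ, ← add_assoc, map_mul,
      Module.End.mul_apply, ih (fun i => e i.succ) (he.comp (Fin.strictMono_succ)) _ hr']
    ext l
    have := negOnePowChoose_add_two_pow (hr 0) l
    simp [seqShift_pow_apply, geomSeq, pow_succ]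
    linear_combination this

lemma exists_aeval_seqShift_prod_sum_smul_negOnePowChoose {s : ℕ} (e : Fin s → ℕ)
    (he : StrictMono e) (he0 : ∀ i, 0 < e i) {k : ℕ} (hk : k = k % 2 + ∑ i, 2 ^ e i)
    (M : Finset ℕ) (w : ℕ → ℤ) :
    ∃ ν : ℤ, aeval seqShift (∏ i, (1 + X ^ 2 ^ e i) : ℤ[X])
        (∑ m ∈ M, w m • (seqShift ^ m) (negOnePowChoose k)) =
      ((∑ m ∈ M, w m) * (2 ^ s - 2 + (k % 2 : ℕ))) • geomSeq 1 + ν • geomSeq (-1) := by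
  have hG := aeval_seqShift_prod_negOnePowChoose e he (k % 2) fun i =>
    (Nat.mod_lt k two_pos).trans_le (Nat.le_self_pow (he0 i).ne' 2)
  rw [← hk] at hG
  set G : ℤ[X] := ∏ i, (1 + X ^ 2 ^ e i)
  have hcomm (m : ℕ) (a : ℕ → ℤ) :
      aeval seqShift G ((seqShift ^ m) a) = (seqShift ^ m) (aeval seqShift G a) := by
    rw [← Module.End.mul_apply, ← Module.End.mul_apply, ← aeval_X_pow (R := ℤ), ← map_mul,
      ← map_mul, mul_comm]
  simp only [map_sum, map_zsmul, hcomm, hG]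
  rcases Nat.mod_two_eq_zero_or_one k with h | h
  · refine ⟨0, ?_⟩
    ext l
    simp [h, seqShift_pow_apply, geomSeq, negOnePowChoose, Finset.sum_apply, sum_mul]
    exact sum_congr rfl fun m _ => by ring
  · refine ⟨∑ m ∈ M, w m * (-1) ^ m, ?_⟩
    ext l
    simp [h, seqShift_pow_apply, geomSeq, negOnePowChoose, Finset.sum_apply, sum_mul]
    rw [← sum_add_distrib]
    exact sum_congr rfl fun m _ => by ring

lemma exists_aeval_seqShift_prod_cyclotomic_binomialTransform {s : ℕ} (e : Fin s → ℕ)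
    (he : StrictMono e) (he0 : ∀ i, 0 < e i) {k : ℕ} (hk : k = k % 2 + ∑ i, 2 ^ e i)
    (M : Finset ℕ) (w : ℕ → ℤ) :
    ∃ ν : ℤ, aeval seqShift (∏ i, (cyclotomic (2 ^ (e i + 1)) ℤ).comp (X - 1))
        (binomialTransform (∑ m ∈ M, w m • (seqShift ^ m) (negOnePowChoose k))) =
      ((∑ m ∈ M, w m) * (2 ^ s - 2 + (k % 2 : ℕ))) • geomSeq 2 + ν • geomSeq 0 := by
  obtain ⟨ν, hν⟩ := exists_aeval_seqShift_prod_sum_smul_negOnePowChoose e he he0 hk M w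
  have hG : ∏ i, (cyclotomic (2 ^ (e i + 1)) ℤ).comp (X - 1) =
      (∏ i, (1 + X ^ 2 ^ e i) : ℤ[X]).comp (X - 1) := by
    simp [Polynomial.prod_comp, cyclotomic_two_pow_succ]
  refine ⟨ν, ?_⟩
  rw [← Module.End.mul_apply, aeval_seqShift_mul_binomialTransform, Module.End.mul_apply, hG,
    aeval_add_one_comp_X_sub_one, hν, map_add, map_smul, map_smul, binomialTransform_geomSeq,
    binomialTransform_geomSeq, one_add_one_eq_two, neg_add_cancel]

lemma Nat.bitIndices_sum_two_pow {s : ℕ} {e : Fin s → ℕ} (he : StrictMono e) :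
    (∑ i, 2 ^ e i).bitIndices = List.ofFn e := by
  rw [← List.sum_ofFn, show List.ofFn (fun i => 2 ^ e i) = (List.ofFn e).map (2 ^ ·) from
    (List.map_ofFn ..).symm]
  exact Nat.bitIndices_sum_map_two_pow (List.sortedLT_ofFn_iff.mpr he)

lemma two_pow_sub_two_add_mod_two_of_eq_two_pow {s k t : ℕ} {e : Fin s → ℕ} (he : StrictMono e)
    (hk : 2 * (k / 2) = ∑ i, 2 ^ e i) (hkt : k = 2 ^ t) : (2 : ℤ) ^ s - 2 + (k % 2 : ℕ) = 0 := by
  have hs : s = (2 * (k / 2)).bitIndices.length := by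
    rw [hk, Nat.bitIndices_sum_two_pow he, List.length_ofFn]
  subst hkt
  rcases t with _ | t
  · norm_num at hs
    simp [hs]
  · rw [pow_succ, Nat.mul_div_cancel _ two_pos, mul_comm, ← pow_succ,
      Nat.bitIndices_two_pow] at hs
    simp [hs, pow_succ]

open Polynomial in
open Classical in
theorem perturbation_recurrence_general
    (k j : ℕ)
    (F : (Fin j → ZMod 2) → ZMod 2)
    (s : ℕ) (e : Fin s → ℕ) (he0 : ∀ i, 0 < e i) (hemono : StrictMono e)
    (hexp : 2 * (k / 2) + 1 = 1 + ∑ i : Fin s, 2 ^ e i)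
    (ε : ℕ) (hε : ε = if ∃ t : ℕ, k = 2 ^ t then 0 else 1)
    (f g : Polynomial ℤ)
    (hf : f = (X - C 2) ^ ε *
      ∏ i : Fin s, (Polynomial.cyclotomic (2 ^ (e i + 1)) ℤ).comp (X - 1))
    (hg : g = ∏ i : Fin s, (Polynomial.cyclotomic (2 ^ (e i + 1)) ℤ).comp (X - 1))
    (b : ℕ → ℤ)
    (hb : ∀ n : ℕ, b n =
      ∑ l ∈ Finset.range (n + 1),
        (∑ m ∈ Finset.range (j + 1), coefC F m * (-1 : ℤ) ^ Nat.choose (l + m) k) *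
          (n.choose l : ℤ)) :
    (∀ n : ℕ, k ≤ n + j →
      b n = expSum (fun x : Fin (n + j) → ZMod 2 =>
        sigma (n + j) k x + F (fun i => x (Fin.castLE (Nat.le_add_left j n) i)))) ∧
    (∀ n : ℕ, 1 ≤ n →
      b (n + f.natDegree) =
        ∑ i ∈ Finset.range f.natDegree, (-(f.coeff i)) * b (n + i)) ∧
    (expSum F = 0 →
      g.natDegree = (2 * (k / 2) + 1) - 1 ∧
      ∀ n : ℕ, 1 ≤ n →
        b (n + g.natDegree) =
          ∑ i ∈ Finset.range g.natDegree, (-(g.coeff i)) * b (n + i)) := by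
  have hbc : b = binomialTransform
      (∑ m ∈ range (j + 1), coefC F m • (seqShift ^ m) (negOnePowChoose k)) := by
    ext n
    simp [hb, binomialTransform_apply, negOnePowChoose, seqShift_pow_apply, Finset.sum_apply]
  obtain ⟨ν, hgb⟩ := exists_aeval_seqShift_prod_cyclotomic_binomialTransform e hemono he0
    (k := k) (by omega) (range (j + 1)) (coefC F)
  rw [← hg, ← hbc, ← expSum_eq_sum_coefC] at hgb
  have hgmonic : g.Monic :=
    hg ▸ monic_prod_of_monic _ _ fun i _ => monic_cyclotomic_comp_X_sub_one _
  have hfg : f = (X - C 2) ^ ε * g := by rw [hf, hg]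
  refine ⟨fun n _ => (hb n).trans (expSum_sigma_add F n k).symm, fun n hn => ?_,
    fun hF => ⟨?_, fun n hn => hgmonic.apply_add_natDegree_eq_of_aeval_seqShift ?_⟩⟩
  · have hκε : expSum F * (2 ^ s - 2 + (k % 2 : ℕ)) = 0 ∨ ε ≠ 0 := by
      split_ifs at hε with hpow
      · obtain ⟨t, ht⟩ := hpow
        rw [two_pow_sub_two_add_mod_two_of_eq_two_pow hemono (by omega) ht, mul_zero]
        exact .inl rfl
      · exact .inr (by simp [hε])
    rw [hfg]
    refine ((monic_X_sub_C 2).pow ε |>.mul hgmonic).apply_add_natDegree_eq_of_aeval_seqShift ?_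
    simp only [map_mul, Module.End.mul_apply, hgb, map_add, map_smul, aeval_seqShift_geomSeq]
    simpa [geomSeq, Nat.one_le_iff_ne_zero.mp hn] using hκε
  · rw [hg, natDegree_prod_cyclotomic_two_pow_comp_X_sub_one]
    omega
  · simp [hgb, hF, geomSeq, Nat.one_le_iff_ne_zero.mp hn]

open Polynomial in
open Classical in
/-- The sequence `b_n = Σ_l (Σ_m C_m(F)(-1)^{C(l+m,k)}) C(n,l) = S(σ_{n+j,k}+F)`
satisfies the linear recurrence with characteristic polynomial
`f(X) = (X−2)^{ε(k)} Π_{l=1}^s Φ_{2^{a_l+1}}(X−1)`; if moreover `F` is balanced, it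
satisfies the recurrence with characteristic polynomial `Π_{l=1}^s Φ_{2^{a_l+1}}(X−1)`,
of degree `k̄ − 1 = 2^{a_s} + ⋯ + 2^{a₁}`. -/
theorem perturbation_recurrence
    (k j : ℕ) (hk : 1 < k) (hj : 1 ≤ j)
    (F : (Fin j → ZMod 2) → ZMod 2)
    (s : ℕ) (e : Fin s → ℕ) (he0 : ∀ i, 0 < e i) (hemono : StrictMono e)
    (hexp : 2 * (k / 2) + 1 = 1 + ∑ i : Fin s, 2 ^ e i)
    (ε : ℕ) (hε : ε = if ∃ t : ℕ, k = 2 ^ t then 0 else 1)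
    (f g : Polynomial ℤ)
    (hf : f = (X - C 2) ^ ε *
      ∏ i : Fin s, (Polynomial.cyclotomic (2 ^ (e i + 1)) ℤ).comp (X - 1))
    (hg : g = ∏ i : Fin s, (Polynomial.cyclotomic (2 ^ (e i + 1)) ℤ).comp (X - 1))
    (b : ℕ → ℤ)
    (hb : ∀ n : ℕ, b n =
      ∑ l ∈ Finset.range (n + 1),
        (∑ m ∈ Finset.range (j + 1), coefC F m * (-1 : ℤ) ^ Nat.choose (l + m) k) *
          (n.choose l : ℤ)) :
    (∀ n : ℕ, k ≤ n + j →
      b n = expSum (fun x : Fin (n + j) → ZMod 2 =>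
        sigma (n + j) k x + F (fun i => x (Fin.castLE (Nat.le_add_left j n) i)))) ∧
    (∀ n : ℕ, 1 ≤ n →
      b (n + f.natDegree) =
        ∑ i ∈ Finset.range f.natDegree, (-(f.coeff i)) * b (n + i)) ∧
    (expSum F = 0 →
      g.natDegree = (2 * (k / 2) + 1) - 1 ∧
      ∀ n : ℕ, 1 ≤ n →
        b (n + g.natDegree) =
          ∑ i ∈ Finset.range g.natDegree, (-(g.coeff i)) * b (n + i)) :=
  perturbation_recurrence_general k j F s e he0 hemono hexp ε hε f g hf hg b hb
end

section
/- Let D, l and m be positive integers with 2m ≤ 2^{l+1}D − 1. Then the perturbation σ_{2^{l+1}D−1, 2^l} + X₁ + X₂ + ⋯ + X_{2m} is balanced, i.e. S(σ_{2^{l+1}D−1, 2^l} + X₁ + ⋯ + X_{2m}) = 0, and the perturbation σ_{2^{l+1}D, 2^l+1} + X₁ + X₂ + ⋯ + X_{2m} is also balanced, i.e. S(σ_{2^{l+1}D, 2^l+1} + X₁ + ⋯ + X_{2m}) = 0. -/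
/-!
Writing `|x|` for the Hamming weight, `σ_{N,k}(x) = C(|x|, k) mod 2`, and Lucas' theorem turns this
into `σ_{N,2^l}(x) = ⌊|x| / 2^l⌋` and `σ_{N,2^l+1}(x) = |x| ⌊|x| / 2^l⌋` mod 2. A function `F` is
balanced as soon as an involution `g` satisfies `F ∘ g = F + 1`; here `g` is a translation
`x ↦ x + e`. The complement `x ↦ x + 1` fixes the linear part `X₁ + ⋯ + X_{2m}`, which has an even
number of terms, and replaces `|x|` by `N - |x|`. If `|x| + (N - |x|) = 2^{l+1} q - 1`, the
quotients of the two summands by `2^l` add up to `2q - 1`, so the complement changes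
`⌊|x| / 2^l⌋` mod 2. This settles the first function, and the second one on inputs of odd weight
(apply it to `|x| - 1`). On inputs of even weight the second `σ` vanishes, and flipping the
coordinates `1` and `2m + 1` keeps the weight even while changing the linear part.
-/

open Finset Function

theorem expSum_eq_zero_of_involutive {N : ℕ} {F : (Fin N → ZMod 2) → ZMod 2}
    {g : (Fin N → ZMod 2) → Fin N → ZMod 2} (hg : Involutive g) (hF : ∀ x, F (g x) = F x + 1) :
    expSum F = 0 := by
  have hsign : ∀ a : ZMod 2, (-1 : ℤ) ^ (a + 1).val = -(-1) ^ a.val := by decide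
  have hneg : expSum F = -expSum F := by
    calc expSum F = ∑ x, (-1 : ℤ) ^ (F (hg.toPerm g x)).val :=
          (Equiv.sum_comp (hg.toPerm g) fun y => (-1 : ℤ) ^ (F y).val).symm
      _ = -expSum F := by simp [expSum, hF, hsign]
  omega

theorem Function.Involutive.ite {α : Type*} {p : α → Prop} [DecidablePred p] {f g : α → α}
    (hf : Involutive f) (hg : Involutive g) (hpf : ∀ x, p (f x) ↔ p x)
    (hpg : ∀ x, p (g x) ↔ p x) : Involutive fun x => if p x then f x else g x := by
  intro x
  by_cases hx : p x <;> simp [hx, hpf, hpg, hf x, hg x]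

theorem add_right_involutive_zmod_two {ι : Type*} (e : ι → ZMod 2) : Involutive (· + e) :=
  fun x => show x + e + e = x by
    rw [add_assoc, show e + e = 0 from funext fun i => CharTwo.add_self_eq_zero (e i), add_zero]

section Hamming

variable {ι : Type*} [Fintype ι]

theorem hammingNorm_add_one (x : ι → ZMod 2) :
    hammingNorm (x + 1) = Fintype.card ι - hammingNorm x := by
  have hzero : ∀ a : ZMod 2, a + 1 ≠ 0 ↔ ¬a ≠ 0 := by decide
  simp only [hammingNorm, Pi.add_apply, Pi.one_apply, hzero]
  exact eq_tsub_of_add_eq ((add_comm _ _).trans (card_filter_add_card_filter_not _))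

theorem natCast_hammingNorm_zmod_two (x : ι → ZMod 2) : (hammingNorm x : ZMod 2) = ∑ i, x i := by
  have hbit : ∀ a : ZMod 2, (if a ≠ 0 then 1 else 0) = a := by decide
  simp only [hammingNorm, natCast_card_filter, hbit]

end Hamming

theorem sigma_eq_choose_hammingNorm (n k : ℕ) (x : Fin n → ZMod 2) :
    sigma n k x = ((hammingNorm x).choose k : ℕ) := by
  have hbit : ∀ a : ZMod 2, a = if a ≠ 0 then 1 else 0 := by decide
  have hsubsets : {A ∈ powersetCard k (univ : Finset (Fin n)) | ∀ i ∈ A, x i ≠ 0} =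
      powersetCard k {i : Fin n | x i ≠ 0} := by
    ext A
    simp [mem_powersetCard, subset_iff, and_comm]
  rw [sigma, sum_congr rfl fun A _ => prod_congr rfl fun i _ => hbit (x i), hammingNorm,
    ← card_powersetCard, ← hsubsets, natCast_card_filter]
  simp only [prod_boole]
  congr!

theorem natCast_choose_mul_eq_choose_div {p : ℕ} [hp : Fact p.Prime] (n k : ℕ) :
    ((n.choose (p * k) : ℕ) : ZMod p) = ((n / p).choose k : ℕ) := by
  rw [ZMod.natCast_eq_natCast_iff]
  simpa [Nat.mul_div_cancel_left _ hp.out.pos] using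
    Choose.choose_modEq_choose_mod_mul_choose_div_nat (n := n) (k := p * k) (p := p)

theorem natCast_choose_pow_mul_eq_choose_div {p : ℕ} [Fact p.Prime] (l n k : ℕ) :
    ((n.choose (p ^ l * k) : ℕ) : ZMod p) = ((n / p ^ l).choose k : ℕ) := by
  induction l generalizing n with
  | zero => simp
  | succ l ih =>
    rw [pow_succ', mul_assoc, natCast_choose_mul_eq_choose_div, ih, Nat.div_div_eq_div_mul]

theorem natCast_choose_two_pow (l n : ℕ) :
    ((n.choose (2 ^ l) : ℕ) : ZMod 2) = (n / 2 ^ l : ℕ) := by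
  simpa using natCast_choose_pow_mul_eq_choose_div l n 1

theorem natCast_choose_two_pow_add_one {l : ℕ} (hl : 1 ≤ l) (n : ℕ) :
    ((n.choose (2 ^ l + 1) : ℕ) : ZMod 2) = n * (n / 2 ^ l : ℕ) := by
  obtain ⟨l, rfl⟩ := Nat.exists_eq_add_of_le' hl
  have hlucas := (ZMod.natCast_eq_natCast_iff _ _ _).mpr
    (Choose.choose_modEq_choose_mod_mul_choose_div_nat (n := n) (k := 2 ^ (l + 1) + 1) (p := 2))
  have hmod : (2 ^ (l + 1) + 1) % 2 = 1 := by rw [Nat.add_mod, Nat.pow_mod]; simp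
  have hdiv : (2 ^ (l + 1) + 1) / 2 = 2 ^ l := by rw [pow_succ]; omega
  rw [hlucas, hmod, hdiv, Nat.cast_mul, natCast_choose_two_pow, Nat.div_div_eq_div_mul,
    ← pow_succ', Nat.choose_one_right, ZMod.natCast_mod]

theorem Nat.div_add_div_add_one_of_add_add_one_eq_mul {a b t q : ℕ} (ht : 0 < t)
    (h : a + b + 1 = t * q) : a / t + b / t + 1 = q := by
  have ha := Nat.div_add_mod a t
  have hb := Nat.div_add_mod b t
  have hlt : t * (a / t + b / t) < t * q := by rw [mul_add]; omega
  have hgt : t * q < t * (a / t + b / t + 2) := by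
    have := Nat.mod_lt a ht
    have := Nat.mod_lt b ht
    rw [mul_add, mul_add]
    omega
  have := Nat.lt_of_mul_lt_mul_left hlt
  have := Nat.lt_of_mul_lt_mul_left hgt
  omega

theorem natCast_sub_div_two_pow {N w l : ℕ} (hw : w ≤ N) (hN : 2 ^ (l + 1) ∣ N + 1) :
    (((N - w) / 2 ^ l : ℕ) : ZMod 2) = (w / 2 ^ l : ℕ) + 1 := by
  obtain ⟨q, hq⟩ := hN
  have hsum := Nat.div_add_div_add_one_of_add_add_one_eq_mul (a := w) (b := N - w)
    (t := 2 ^ l) (q := 2 * q) (by positivity) (by rw [← mul_assoc, ← pow_succ]; omega)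
  have hcast := congrArg (Nat.cast : ℕ → ZMod 2) hsum
  push_cast at hcast
  grind

theorem natCast_sub_div_two_pow_of_odd {N w l : ℕ} (hl : 1 ≤ l) (hw : w ≤ N)
    (hN : 2 ^ (l + 1) ∣ N) (hodd : Odd w) :
    (((N - w) / 2 ^ l : ℕ) : ZMod 2) = (w / 2 ^ l : ℕ) + 1 := by
  obtain ⟨v, rfl⟩ := hodd
  have heven : Even (2 ^ l) := (Nat.even_pow' (by omega)).mpr even_two
  have hdvd : ¬2 ^ l ∣ 2 * v + 1 := fun h => by have := heven.two_dvd.trans h; omega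
  have hpred := natCast_sub_div_two_pow (N := N - 1) (w := 2 * v) (l := l) (by omega)
    (by rwa [Nat.sub_add_cancel (by omega)])
  rwa [Nat.succ_div_of_not_dvd hdvd, show N - (2 * v + 1) = N - 1 - 2 * v by omega]

theorem expSum_sigma_two_pow_add_eq_zero {N l : ℕ} (hN : 2 ^ (l + 1) ∣ N + 1)
    {L : (Fin N → ZMod 2) → ZMod 2} (hL : ∀ x, L (x + 1) = L x) :
    expSum (fun x => sigma N (2 ^ l) x + L x) = 0 := by
  refine expSum_eq_zero_of_involutive (add_right_involutive_zmod_two 1) fun x => ?_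
  have hw : hammingNorm x ≤ N := by simpa using hammingNorm_le_card_fintype (x := x)
  simp only [hL, sigma_eq_choose_hammingNorm, natCast_choose_two_pow, hammingNorm_add_one,
    Fintype.card_fin, natCast_sub_div_two_pow hw hN]
  ring

theorem expSum_sigma_two_pow_add_one_add_eq_zero {N l : ℕ} (hl : 1 ≤ l) (hN : 2 ^ (l + 1) ∣ N)
    {L : (Fin N → ZMod 2) → ZMod 2} (hL : ∀ x, L (x + 1) = L x) {e : Fin N → ZMod 2}
    (he : ∑ i, e i = 0) (hLe : ∀ x, L (x + e) = L x + 1) :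
    expSum (fun x => sigma N (2 ^ l + 1) x + L x) = 0 := by
  have hsigma : ∀ x, sigma N (2 ^ l + 1) x = (∑ i, x i) * (hammingNorm x / 2 ^ l : ℕ) :=
    fun x => by rw [sigma_eq_choose_hammingNorm, natCast_choose_two_pow_add_one hl,
      natCast_hammingNorm_zmod_two]
  have hsum_add : ∀ {c : Fin N → ZMod 2}, ∑ i, c i = 0 → ∀ x, ∑ i, (x + c) i = ∑ i, x i :=
    fun hc x => by simp [sum_add_distrib, hc]
  have hsum_one : ∀ x : Fin N → ZMod 2, ∑ i, (x + 1) i = ∑ i, x i := by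
    refine hsum_add ?_
    simpa using (ZMod.natCast_eq_zero_iff _ _).mpr ((dvd_pow_self 2 (by omega)).trans hN)
  have hsum_e : ∀ x : Fin N → ZMod 2, ∑ i, (x + e) i = ∑ i, x i := hsum_add he
  refine expSum_eq_zero_of_involutive ((add_right_involutive_zmod_two 1).ite
    (add_right_involutive_zmod_two e) (p := fun x => ∑ i, x i = 1)
    (fun x => by rw [hsum_one]) (fun x => by rw [hsum_e])) fun x => ?_
  by_cases hx : ∑ i, x i = 1
  · have hw : hammingNorm x ≤ N := by simpa using hammingNorm_le_card_fintype (x := x)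
    have hodd : Odd (hammingNorm x) :=
      ZMod.natCast_eq_one_iff_odd.mp ((natCast_hammingNorm_zmod_two x).trans hx)
    rw [if_pos hx]
    simp only [hsigma, hsum_one, hx, hL, one_mul, hammingNorm_add_one,
      Fintype.card_fin, natCast_sub_div_two_pow_of_odd hl hw hN hodd]
    ring
  · have hx0 : ∑ i, x i = 0 := by
      generalize ∑ i, x i = s at hx
      revert s
      decide
    rw [if_neg hx]
    simp only [hsigma, hsum_e, hx0, zero_mul, hLe]
    ring

theorem trivially_balanced_family_general
    (D l m : ℕ) (hl : 1 ≤ l) (hm : 1 ≤ m)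
    (h2m : 2 * m ≤ 2 ^ (l + 1) * D - 1) :
    expSum (fun x : Fin (2 ^ (l + 1) * D - 1) → ZMod 2 =>
        sigma (2 ^ (l + 1) * D - 1) (2 ^ l) x +
          ∑ i : Fin (2 * m), x (Fin.castLE h2m i)) = 0 ∧
    expSum (fun x : Fin (2 ^ (l + 1) * D) → ZMod 2 =>
        sigma (2 ^ (l + 1) * D) (2 ^ l + 1) x +
          ∑ i : Fin (2 * m), x (Fin.castLE (h2m.trans (Nat.sub_le _ _)) i)) = 0 := by
  have hL : ∀ {n} (h : 2 * m ≤ n) (x : Fin n → ZMod 2),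
      ∑ i : Fin (2 * m), (x + 1) (Fin.castLE h i) = ∑ i : Fin (2 * m), x (Fin.castLE h i) := by
    intro n h x
    simp [sum_add_distrib, show (2 : ZMod 2) = 0 from rfl]
  have hlt : 2 * m < 2 ^ (l + 1) * D := by omega
  refine ⟨expSum_sigma_two_pow_add_eq_zero ?_ (hL h2m),
    expSum_sigma_two_pow_add_one_add_eq_zero hl (dvd_mul_right _ _) (hL _)
      (e := Pi.single ⟨0, by omega⟩ 1 + Pi.single ⟨2 * m, hlt⟩ 1) ?_ ?_⟩
  · rw [Nat.sub_add_cancel (by omega)]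
    exact dvd_mul_right _ _
  · simp only [Pi.add_apply, sum_add_distrib, sum_pi_single', mem_univ, if_true]
    exact CharTwo.add_self_eq_zero 1
  · intro x
    simp only [Pi.add_apply, sum_add_distrib, Pi.single_apply, Fin.ext_iff, Fin.val_castLE]
    rw [Fin.sum_univ_eq_sum_range (fun j => if j = 0 then (1 : ZMod 2) else 0),
      Fin.sum_univ_eq_sum_range (fun j => if j = 2 * m then (1 : ZMod 2) else 0), sum_ite_eq',
      sum_ite_eq']
    simp [Nat.one_le_iff_ne_zero.mp hm]

/-- For positive integers `D`, `l`, `m` with `2m ≤ 2^{l+1}D − 1`, the perturbations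
`σ_{2^{l+1}D−1,2^l} + X₁ + ⋯ + X_{2m}` and `σ_{2^{l+1}D,2^l+1} + X₁ + ⋯ + X_{2m}`
are balanced. -/
theorem trivially_balanced_family
    (D l m : ℕ) (hD : 1 ≤ D) (hl : 1 ≤ l) (hm : 1 ≤ m)
    (h2m : 2 * m ≤ 2 ^ (l + 1) * D - 1) :
    expSum (fun x : Fin (2 ^ (l + 1) * D - 1) → ZMod 2 =>
        sigma (2 ^ (l + 1) * D - 1) (2 ^ l) x +
          ∑ i : Fin (2 * m), x (Fin.castLE h2m i)) = 0 ∧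
    expSum (fun x : Fin (2 ^ (l + 1) * D) → ZMod 2 =>
        sigma (2 ^ (l + 1) * D) (2 ^ l + 1) x +
          ∑ i : Fin (2 * m), x (Fin.castLE (h2m.trans (Nat.sub_le _ _)) i)) = 0 :=
  trivially_balanced_family_general D l m hl hm h2m
end
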